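/- Let R > 0 and θ ∈ (0, 2π). Then, as s → 0⁺, the quantity −i(θ − π)/(4πs) − (R/4)·∫₀^∞ (1/t²)·( e^{iθ} q_s(t)/(1 − e^{iθ} q_s(t)) − e^{−iθ} q_s(t)/(1 − e^{−iθ} q_s(t)) ) dt converges to 0. (This shows that the apparently divergent da-coefficient −i(θ_e − π)/(4πa) produced by the gauge transformation θ_m ↦ θ'_m is exactly cancelled by the Bessel-type correction integrals as the base coordinate a = sb tends to 0 in the Ooguri–Vafa geometry.) -/

import Mathlib

/-!
Write `B(x) = e^{iθ}x/(1 - e^{iθ}x) - e^{-iθ}x/(1 - e^{-iθ}x)` and `a = πRs`. Since `t + 1/t` is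
invariant under `t ↦ 1/t`, that substitution removes the factor `1/t²`. Replacing
`e^{-a(t + 1/t)}` by `e^{-at}` gives an integral with antiderivative
`(log (1 - e^{iθ}e^{-at}) - log (1 - e^{-iθ}e^{-at}))/a`; as `arg (1 - e^{iθ}) = (θ - π)/2`, it
equals `-i(θ - π)/a`, and `R/4` times it cancels the divergent term. The remainder
`∫₀^∞ (B(e^{-a(u + 1/u)}) - B(e^{-au})) du` tends to `0` as `a → 0⁺` by dominated convergence:
`B` is Lipschitz on `[0, 1]`, and `|e^{-a(u + 1/u)} - e^{-au}|` is bounded both by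
`min(1, u⁻²)` and by `1 - e^{-a/u}`.
-/

open Complex Filter MeasureTheory Set Topology

lemma exp_neg_mul_mem_Icc {a u : ℝ} (ha : 0 ≤ a) (hu : 0 ≤ u) : Real.exp (-a * u) ∈ Icc 0 1 :=
  ⟨(Real.exp_pos _).le, Real.exp_le_one_iff.mpr (by nlinarith)⟩

section CompExp

variable {F : Type*} [NormedAddCommGroup F] {f : ℝ → F} {K : NNReal} {a : ℝ} {φ : ℝ → ℝ}

lemma continuousOn_comp_exp_neg_mul (hf : ContinuousOn f (Icc 0 1)) (ha : 0 ≤ a) {s : Set ℝ}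
    (hφ : ContinuousOn φ s) (hφ0 : ∀ u ∈ s, 0 ≤ φ u) :
    ContinuousOn (fun u => f (Real.exp (-a * φ u))) s :=
  hf.comp (Real.continuous_exp.comp_continuousOn (hφ.const_smul (-a)))
    fun u hu => exp_neg_mul_mem_Icc ha (hφ0 u hu)

lemma integrableOn_comp_exp_neg_mul (hf : LipschitzOnWith K f (Icc 0 1)) (hf0 : f 0 = 0)
    (ha : 0 < a) (hφ : ContinuousOn φ (Ioi 0)) (hφu : ∀ u ∈ Ioi (0 : ℝ), u ≤ φ u) :
    IntegrableOn (fun u => f (Real.exp (-a * φ u))) (Ioi 0) := by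
  have hmem : ∀ u ∈ Ioi (0 : ℝ), Real.exp (-a * φ u) ∈ Icc 0 1 := fun u hu =>
    exp_neg_mul_mem_Icc ha.le ((le_of_lt hu).trans (hφu u hu))
  refine ((exp_neg_integrableOn_Ioi 0 ha).const_mul K).mono' ?_ ?_
  · exact (continuousOn_comp_exp_neg_mul hf.continuousOn ha.le hφ fun u hu =>
      (le_of_lt hu).trans (hφu u hu)).aestronglyMeasurable measurableSet_Ioi
  · refine (ae_restrict_iff' measurableSet_Ioi).mpr (ae_of_all _ fun u hu => ?_)
    calc ‖f (Real.exp (-a * φ u))‖ = dist (f (Real.exp (-a * φ u))) (f 0) := by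
          rw [hf0, dist_zero_right]
      _ ≤ K * dist (Real.exp (-a * φ u)) 0 := hf.dist_le_mul _ (hmem u hu) _ ⟨le_rfl, zero_le_one⟩
      _ ≤ K * Real.exp (-a * u) := by
          rw [Real.dist_0_eq_abs, abs_of_pos (Real.exp_pos _)]
          exact mul_le_mul_of_nonneg_left (Real.exp_le_exp.mpr (by nlinarith [hφu u hu])) K.2

end CompExp

section ExpDifference

variable {a u : ℝ}

lemma dist_exp_neg_mul_add_inv_eq (ha : 0 ≤ a) (hu : 0 < u) :
    dist (Real.exp (-a * (u + 1 / u))) (Real.exp (-a * u)) =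
      Real.exp (-a * u) * (1 - Real.exp (-(a / u))) := by
  have hsplit : Real.exp (-a * (u + 1 / u)) = Real.exp (-a * u) * Real.exp (-(a / u)) := by
    rw [← Real.exp_add]; ring_nf
  have he : Real.exp (-(a / u)) ≤ 1 := Real.exp_le_one_iff.mpr (neg_nonpos.mpr (by positivity))
  rw [Real.dist_eq, hsplit, abs_sub_comm, ← mul_one_sub, abs_of_nonneg]
  exact mul_nonneg (Real.exp_pos _).le (sub_nonneg.mpr he)

lemma dist_exp_neg_mul_add_inv_le_one_sub (ha : 0 ≤ a) (hu : 0 < u) :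
    dist (Real.exp (-a * (u + 1 / u))) (Real.exp (-a * u)) ≤ 1 - Real.exp (-(a / u)) := by
  rw [dist_exp_neg_mul_add_inv_eq ha hu]
  have he : Real.exp (-(a / u)) ≤ 1 := Real.exp_le_one_iff.mpr (neg_nonpos.mpr (by positivity))
  exact mul_le_of_le_one_left (sub_nonneg.mpr he) (exp_neg_mul_mem_Icc ha hu.le).2

lemma dist_exp_neg_mul_add_inv_le_inv_one_add_sq (ha : 0 ≤ a) (hu : 0 < u) :
    dist (Real.exp (-a * (u + 1 / u))) (Real.exp (-a * u)) ≤ 2 * (1 + u ^ 2)⁻¹ := by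
  set d := dist (Real.exp (-a * (u + 1 / u))) (Real.exp (-a * u))
  have hd_le_one : d ≤ 1 := Real.dist_le_of_mem_Icc_01
    (exp_neg_mul_mem_Icc ha (by positivity)) (exp_neg_mul_mem_Icc ha hu.le)
  have hd_mul_sq : d * u ^ 2 ≤ 1 := by
    have hy : Real.exp (-a * u) * (a * u) ≤ 1 := by
      have := Real.add_one_le_exp (a * u)
      rw [neg_mul, Real.exp_neg, inv_mul_le_iff₀ (Real.exp_pos _)]
      linarith
    have he : 1 - Real.exp (-(a / u)) ≤ a / u := by linarith [Real.add_one_le_exp (-(a / u))]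
    rw [show d = _ from dist_exp_neg_mul_add_inv_eq ha hu]
    calc Real.exp (-a * u) * (1 - Real.exp (-(a / u))) * u ^ 2
        ≤ Real.exp (-a * u) * (a / u) * u ^ 2 := by gcongr
      _ = Real.exp (-a * u) * (a * u) := by field_simp
      _ ≤ 1 := hy
  rw [le_mul_inv_iff₀ (by positivity)]
  linarith

end ExpDifference

theorem tendsto_integral_comp_exp_neg_mul_add_inv_sub {F : Type*} [NormedAddCommGroup F]
    [NormedSpace ℝ F] {f : ℝ → F} {K : NNReal} (hf : LipschitzOnWith K f (Icc 0 1)) :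
    Tendsto (fun a => ∫ u in Ioi 0, (f (Real.exp (-a * (u + 1 / u))) - f (Real.exp (-a * u))))
      (𝓝[>] 0) (𝓝 0) := by
  have hdist : ∀ a ≥ (0 : ℝ), ∀ u > (0 : ℝ),
      ‖f (Real.exp (-a * (u + 1 / u))) - f (Real.exp (-a * u))‖ ≤
        K * dist (Real.exp (-a * (u + 1 / u))) (Real.exp (-a * u)) := fun a ha u hu =>
    dist_eq_norm (f _) (f _) ▸ hf.dist_le_mul _ (exp_neg_mul_mem_Icc ha (by positivity)) _
      (exp_neg_mul_mem_Icc ha hu.le)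
  have hmeas : ∀ᶠ a in 𝓝[>] 0, AEStronglyMeasurable
      (fun u => f (Real.exp (-a * (u + 1 / u))) - f (Real.exp (-a * u)))
      (volume.restrict (Ioi 0)) := by
    filter_upwards [self_mem_nhdsWithin] with a (ha : 0 < a)
    have hφ : ContinuousOn (fun u : ℝ => u + 1 / u) (Ioi 0) := by
      fun_prop (disch := exact fun x hx => ne_of_gt hx)
    exact ((continuousOn_comp_exp_neg_mul hf.continuousOn ha.le hφ fun u (hu : 0 < u) =>
      by positivity).sub (continuousOn_comp_exp_neg_mul (φ := fun u => u) hf.continuousOn ha.le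
        (continuousOn_id' _) fun u hu => le_of_lt hu)).aestronglyMeasurable measurableSet_Ioi
  have hbound : ∀ᶠ a in 𝓝[>] 0, ∀ᵐ u ∂(volume.restrict (Ioi 0)),
      ‖f (Real.exp (-a * (u + 1 / u))) - f (Real.exp (-a * u))‖ ≤ K * (2 * (1 + u ^ 2)⁻¹) := by
    filter_upwards [self_mem_nhdsWithin] with a (ha : 0 < a)
    refine (ae_restrict_iff' measurableSet_Ioi).mpr (ae_of_all _ fun u (hu : 0 < u) => ?_)
    exact (hdist a ha.le u hu).trans
      (mul_le_mul_of_nonneg_left (dist_exp_neg_mul_add_inv_le_inv_one_add_sq ha.le hu) K.2)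
  have hlim : ∀ u > (0 : ℝ),
      Tendsto (fun a => f (Real.exp (-a * (u + 1 / u))) - f (Real.exp (-a * u)))
        (𝓝[>] 0) (𝓝 0) := by
    intro u hu
    refine squeeze_zero_norm' (a := fun a => K * (1 - Real.exp (-(a / u)))) ?_ ?_
    · filter_upwards [self_mem_nhdsWithin] with a (ha : 0 < a)
      exact (hdist a ha.le u hu).trans
        (mul_le_mul_of_nonneg_left (dist_exp_neg_mul_add_inv_le_one_sub ha.le hu) K.2)
    · have hcont : Continuous fun a : ℝ => (K : ℝ) * (1 - Real.exp (-(a / u))) := by fun_prop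
      exact (hcont.tendsto' 0 0 (by simp)).mono_left nhdsWithin_le_nhds
  simpa using tendsto_integral_filter_of_dominated_convergence _ hmeas hbound
    ((integrable_inv_one_add_sq.const_mul 2).const_mul _).integrableOn
    ((ae_restrict_iff' measurableSet_Ioi).mpr (ae_of_all _ hlim))

lemma integral_Ioi_inv_sq_mul_of_comp_inv {f : ℝ → ℂ} (hf : ∀ t, f t⁻¹ = f t) :
    ∫ t in Ioi (0 : ℝ), 1 / (t : ℂ) ^ 2 * f t = ∫ t in Ioi 0, f t := by
  have h := mellin_comp_inv f 1
  simp only [hf] at h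
  rw [mellin, mellin] at h
  convert h.symm using 1
  · refine setIntegral_congr_fun measurableSet_Ioi fun t _ => ?_
    rw [smul_eq_mul, show (-1 : ℂ) - 1 = -(2 : ℕ) by norm_num, cpow_neg, cpow_natCast, one_div]
  · simp

noncomputable def geomRatio (E : ℂ) (x : ℝ) : ℂ := E * x / (1 - E * x)

section GeomRatio

variable {E : ℂ} {x : ℝ}

@[simp]
lemma geomRatio_zero (E : ℂ) : geomRatio E 0 = 0 := by simp [geomRatio]

lemma min_one_sub_re_le_re_one_sub_mul (E : ℂ) (hx : x ∈ Icc (0 : ℝ) 1) :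
    min 1 (1 - E.re) ≤ (1 - E * x).re := by
  have hre : (1 - E * x).re = 1 - E.re * x := by simp
  rw [hre]
  rcases le_total E.re 0 with h | h
  · exact (min_le_left _ _).trans (by nlinarith [hx.1])
  · exact (min_le_right _ _).trans (by nlinarith [hx.2])

lemma re_one_sub_mul_ofReal_pos (hE : E.re < 1) (hx : x ∈ Icc (0 : ℝ) 1) :
    0 < (1 - E * x).re :=
  (lt_min one_pos (sub_pos.mpr hE)).trans_le (min_one_sub_re_le_re_one_sub_mul E hx)

lemma one_sub_mul_ofReal_ne_zero (hE : E.re < 1) (hx : x ∈ Icc (0 : ℝ) 1) :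
    1 - E * x ≠ 0 :=
  slitPlane_ne_zero (.inl (re_one_sub_mul_ofReal_pos hE hx))

lemma lipschitzOnWith_geomRatio (hE : E.re < 1) :
    LipschitzOnWith (‖E‖ / min 1 (1 - E.re) ^ 2).toNNReal (geomRatio E) (Icc 0 1) := by
  refine LipschitzOnWith.of_dist_le' fun x hx y hy => ?_
  have hx' := (min_one_sub_re_le_re_one_sub_mul E hx).trans (re_le_norm _)
  have hy' := (min_one_sub_re_le_re_one_sub_mul E hy).trans (re_le_norm _)
  have hdiff : geomRatio E x - geomRatio E y =
      E * ((x - y : ℝ) : ℂ) / ((1 - E * x) * (1 - E * y)) := by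
    rw [geomRatio, geomRatio, div_sub_div _ _ (one_sub_mul_ofReal_ne_zero hE hx)
      (one_sub_mul_ofReal_ne_zero hE hy)]
    push_cast; ring
  have hδ : 0 < min 1 (1 - E.re) := lt_min one_pos (sub_pos.mpr hE)
  rw [dist_eq_norm, hdiff, norm_div, norm_mul, norm_mul, norm_real, Real.dist_eq,
    Real.norm_eq_abs]
  calc ‖E‖ * |x - y| / (‖1 - E * x‖ * ‖1 - E * y‖)
      ≤ ‖E‖ * |x - y| / (min 1 (1 - E.re) * min 1 (1 - E.re)) := by gcongr
    _ = ‖E‖ / min 1 (1 - E.re) ^ 2 * |x - y| := by ring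

lemma integrableOn_geomRatio_exp_neg_mul (hE : E.re < 1) {a : ℝ} (ha : 0 < a) :
    IntegrableOn (fun u => geomRatio E (Real.exp (-a * u))) (Ioi 0) :=
  integrableOn_comp_exp_neg_mul (φ := fun u => u) (lipschitzOnWith_geomRatio hE)
    (geomRatio_zero E) ha (continuousOn_id' _) fun _ _ => le_rfl

lemma integral_geomRatio_exp_neg_mul (hE : E.re < 1) {a : ℝ} (ha : 0 < a) :
    ∫ u in Ioi 0, geomRatio E (Real.exp (-a * u)) = -log (1 - E) / a := by
  have hmem : ∀ u ∈ Ici (0 : ℝ), Real.exp (-a * u) ∈ Icc 0 1 := fun u hu =>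
    exp_neg_mul_mem_Icc ha.le hu
  have hslit : ∀ x ∈ Icc (0 : ℝ) 1, 1 - E * x ∈ slitPlane := fun x hx =>
    .inl (re_one_sub_mul_ofReal_pos hE hx)
  have hderiv : ∀ u ∈ Ici (0 : ℝ), HasDerivAt (fun u : ℝ => log (1 - E * Real.exp (-a * u)) / a)
      (geomRatio E (Real.exp (-a * u))) u := by
    intro u hu
    have h := (((((hasDerivAt_id u).const_mul (-a)).exp.ofReal_comp).const_mul E).const_sub
      1).clog_real (hslit _ (hmem u hu))
    refine (h.div_const (a : ℂ)).congr_deriv ?_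
    have hne := one_sub_mul_ofReal_ne_zero hE (hmem u hu)
    have ha' : (a : ℂ) ≠ 0 := ofReal_ne_zero.mpr ha.ne'
    simp only [geomRatio, id, ofReal_mul, ofReal_neg, ofReal_one]
    field_simp
  have hlim : Tendsto (fun u : ℝ => log (1 - E * Real.exp (-a * u)) / a) atTop (𝓝 0) := by
    have hexp : Tendsto (fun u : ℝ => Real.exp (-a * u)) atTop (𝓝 0) :=
      Real.tendsto_exp_atBot.comp (tendsto_id.const_mul_atTop_of_neg (neg_neg_of_pos ha))
    have hcont : ContinuousAt (fun x : ℝ => log (1 - E * x) / a) 0 :=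
      (((continuous_const.sub (continuous_const.mul continuous_ofReal)).continuousAt).clog
        (hslit 0 ⟨le_rfl, zero_le_one⟩)).div_const _
    have h := hcont.tendsto.comp hexp
    rwa [ofReal_zero, mul_zero, sub_zero, log_one, zero_div] at h
  rw [integral_Ioi_of_hasDerivAt_of_tendsto' hderiv (integrableOn_geomRatio_exp_neg_mul hE ha)
    hlim]
  simp [neg_div]

end GeomRatio

lemma one_sub_exp_mul_I (θ : ℝ) :
    1 - exp (θ * I) = (2 * Real.sin (θ / 2) : ℝ) * exp (((θ - Real.pi) / 2 : ℝ) * I) := by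
  have hsplit : exp (((θ - Real.pi) / 2 : ℝ) * I) = exp ((θ / 2 : ℝ) * I) * -I := by
    rw [← exp_neg_pi_div_two_mul_I, ← exp_add]; push_cast; ring_nf
  have hsq : exp (θ * I) = exp ((θ / 2 : ℝ) * I) ^ 2 := by
    rw [← exp_nat_mul]; push_cast; ring_nf
  have hinv : exp (-(θ / 2 : ℝ) * I) = (exp ((θ / 2 : ℝ) * I))⁻¹ := by
    rw [← exp_neg, neg_mul]
  have hne := exp_ne_zero (((θ / 2 : ℝ) : ℂ) * I)
  rw [hsplit, hsq, ofReal_mul, ofReal_ofNat, ofReal_sin, sin, hinv]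
  field_simp
  linear_combination (1 - exp ((θ / 2 : ℝ) * I) ^ 2) * I_sq

lemma log_one_sub_exp_mul_I {θ : ℝ} (hθ : θ ∈ Ioo 0 (2 * Real.pi)) :
    log (1 - exp (θ * I)) = Real.log (2 * Real.sin (θ / 2)) + ((θ - Real.pi) / 2 : ℝ) * I := by
  have hsin : 0 < 2 * Real.sin (θ / 2) :=
    mul_pos two_pos (Real.sin_pos_of_pos_of_lt_pi (by linarith [hθ.1]) (by linarith [hθ.2]))
  rw [one_sub_exp_mul_I, log_ofReal_mul hsin (exp_ne_zero _), log_exp] <;>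
    simp only [mul_im, ofReal_re, ofReal_im, I_re, I_im] <;> linarith [hθ.1, hθ.2, Real.pi_pos]

lemma log_one_sub_exp_neg_mul_I_sub {θ : ℝ} (hθ : θ ∈ Ioo 0 (2 * Real.pi)) :
    log (1 - exp (-θ * I)) - log (1 - exp (θ * I)) = -I * (θ - Real.pi) := by
  have hθ' : 2 * Real.pi - θ ∈ Ioo 0 (2 * Real.pi) := ⟨by linarith [hθ.2], by linarith [hθ.1]⟩
  have hexp : exp (-θ * I) = exp ((2 * Real.pi - θ : ℝ) * I) := by
    rw [show ((2 * Real.pi - θ : ℝ) : ℂ) * I = -θ * I + 2 * Real.pi * I by push_cast; ring,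
      exp_add, exp_two_pi_mul_I, mul_one]
  rw [hexp, log_one_sub_exp_mul_I hθ', log_one_sub_exp_mul_I hθ,
    show (2 * Real.pi - θ) / 2 = Real.pi - θ / 2 by ring, Real.sin_pi_sub]
  push_cast
  ring

noncomputable def geomRatioAntisymm (θ : ℝ) (x : ℝ) : ℂ :=
  geomRatio (exp (θ * I)) x - geomRatio (exp (-θ * I)) x

section GeomRatioAntisymm

variable {θ : ℝ}

lemma re_exp_mul_I_lt_one (hθ : θ ∈ Ioo 0 (2 * Real.pi)) : (exp (θ * I)).re < 1 := by
  rw [exp_ofReal_mul_I_re]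
  exact (Real.cos_le_one θ).lt_of_ne fun h => hθ.1.ne'
    ((Real.cos_eq_one_iff_of_lt_of_lt (by linarith [hθ.1, Real.pi_pos]) hθ.2).mp h)

lemma re_exp_neg_mul_I_lt_one (hθ : θ ∈ Ioo 0 (2 * Real.pi)) : (exp (-θ * I)).re < 1 := by
  rw [← ofReal_neg, exp_ofReal_mul_I_re, Real.cos_neg, ← exp_ofReal_mul_I_re]
  exact re_exp_mul_I_lt_one hθ

@[simp]
lemma geomRatioAntisymm_zero (θ : ℝ) : geomRatioAntisymm θ 0 = 0 := by
  simp [geomRatioAntisymm]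

lemma exists_lipschitzOnWith_geomRatioAntisymm (hθ : θ ∈ Ioo 0 (2 * Real.pi)) :
    ∃ K, LipschitzOnWith K (geomRatioAntisymm θ) (Icc 0 1) :=
  ⟨_, (lipschitzOnWith_geomRatio (re_exp_mul_I_lt_one hθ)).sub
    (lipschitzOnWith_geomRatio (re_exp_neg_mul_I_lt_one hθ))⟩

lemma integral_geomRatioAntisymm_exp_neg_mul (hθ : θ ∈ Ioo 0 (2 * Real.pi)) {a : ℝ} (ha : 0 < a) :
    ∫ u in Ioi 0, geomRatioAntisymm θ (Real.exp (-a * u)) = -I * (θ - Real.pi) / a := by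
  have hpos := re_exp_mul_I_lt_one hθ
  have hneg := re_exp_neg_mul_I_lt_one hθ
  simp only [geomRatioAntisymm]
  rw [integral_sub (integrableOn_geomRatio_exp_neg_mul hpos ha)
      (integrableOn_geomRatio_exp_neg_mul hneg ha), integral_geomRatio_exp_neg_mul hpos ha,
    integral_geomRatio_exp_neg_mul hneg ha, ← log_one_sub_exp_neg_mul_I_sub hθ]
  ring

lemma integral_inv_sq_mul_geomRatioAntisymm (hθ : θ ∈ Ioo 0 (2 * Real.pi)) {a : ℝ} (ha : 0 < a) :
    ∫ t in Ioi (0 : ℝ), 1 / (t : ℂ) ^ 2 * geomRatioAntisymm θ (Real.exp (-a * (t + 1 / t))) =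
      -I * (θ - Real.pi) / a + ∫ u in Ioi 0,
        (geomRatioAntisymm θ (Real.exp (-a * (u + 1 / u))) -
          geomRatioAntisymm θ (Real.exp (-a * u))) := by
  obtain ⟨K, hK⟩ := exists_lipschitzOnWith_geomRatioAntisymm hθ
  have hsym := integrableOn_comp_exp_neg_mul hK (geomRatioAntisymm_zero θ) ha
    (φ := fun u => u + 1 / u) (by fun_prop (disch := exact fun x hx => ne_of_gt hx))
    fun u (hu : 0 < u) => le_add_of_nonneg_right (by positivity)
  have hlin := integrableOn_comp_exp_neg_mul (φ := fun u => u) hK (geomRatioAntisymm_zero θ) ha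
    (continuousOn_id' _) fun _ _ => le_rfl
  rw [integral_Ioi_inv_sq_mul_of_comp_inv fun t => by simp only [one_div, inv_inv, add_comm],
    integral_sub hsym hlin, ← integral_geomRatioAntisymm_exp_neg_mul hθ ha]
  ring

end GeomRatioAntisymm

/-- The apparently divergent `da`-coefficient `-i(θ_e - π)/(4πa)` produced by the gauge
transformation `θ_m ↦ θ'_m` is exactly cancelled by the Bessel-type correction integrals
as `a = sb → 0` in the Ooguri–Vafa geometry: for `R > 0` and `θ ∈ (0, 2π)`, as `s → 0⁺`,
`-i(θ-π)/(4πs) - (R/4)∫₀^∞ (1/t²)(e^{iθ}q_s(t)/(1-e^{iθ}q_s(t))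
   - e^{-iθ}q_s(t)/(1-e^{-iθ}q_s(t))) dt → 0`. -/
theorem ov_da_coefficient_cancellation (R θ : ℝ) (hR : 0 < R)
    (hθ : θ ∈ Set.Ioo 0 (2 * Real.pi)) :
    Tendsto (fun s : ℝ =>
        -I * ((θ : ℂ) - (Real.pi : ℂ)) / (4 * (Real.pi : ℂ) * (s : ℂ)) -
        ((R : ℂ) / 4) *
          (∫ t in Set.Ioi (0:ℝ), (1 / (t : ℂ) ^ 2) *
            (Complex.exp ((θ : ℂ) * I) * (Real.exp (-Real.pi * R * s * (t + 1 / t)) : ℂ) /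
              (1 - Complex.exp ((θ : ℂ) * I) *
                (Real.exp (-Real.pi * R * s * (t + 1 / t)) : ℂ)) -
             Complex.exp (-(θ : ℂ) * I) * (Real.exp (-Real.pi * R * s * (t + 1 / t)) : ℂ) /
              (1 - Complex.exp (-(θ : ℂ) * I) *
                (Real.exp (-Real.pi * R * s * (t + 1 / t)) : ℂ)))))
      (nhdsWithin 0 (Set.Ioi 0)) (nhds 0) := by
  obtain ⟨K, hK⟩ := exists_lipschitzOnWith_geomRatioAntisymm hθ
  have hπR : 0 < Real.pi * R := mul_pos Real.pi_pos hR
  have hlim := ((tendsto_integral_comp_exp_neg_mul_add_inv_sub hK).comp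
    (tendsto_iff_comap.mpr (comap_mulLeft_nhdsGT_zero hπR).ge)).const_mul (-(R / 4 : ℂ))
  rw [mul_zero] at hlim
  refine hlim.congr' ?_
  filter_upwards [self_mem_nhdsWithin] with s (hs : 0 < s)
  have hsplit : ∀ J : ℂ, -(R / 4 : ℂ) * J = -I * (θ - Real.pi) / (4 * Real.pi * s) -
      R / 4 * (-I * (θ - Real.pi) / ((Real.pi * R * s : ℝ) : ℂ) + J) := fun J => by
    have hs' : (s : ℂ) ≠ 0 := ofReal_ne_zero.mpr hs.ne'
    have hR' : (R : ℂ) ≠ 0 := ofReal_ne_zero.mpr hR.ne'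
    have hπ : (Real.pi : ℂ) ≠ 0 := ofReal_ne_zero.mpr Real.pi_ne_zero
    push_cast; field_simp; ring
  simp only [Function.comp_apply, show ∀ x, -Real.pi * R * s * x = -(Real.pi * R * s) * x from
    fun x => by ring]
  rw [hsplit, ← integral_inv_sq_mul_geomRatioAntisymm hθ (mul_pos hπR hs)]
  rfl
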